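/- arXiv:2312.02023 — 12 statements merged into one kernel-verified Lean document; each statement's English description precedes it below -/
import Mathlib

section
/- Let K be a positive commutative monoid. Then K has the transportation property if and only if the inner consistency property holds for K-relations, i.e., if and only if for all finite types A, B, C, every pair of inner consistent K-relations R : A × C → K and S : B × C → K is consistent. -/
/-!
Fiberwise, inner consistency of `R` and `S` is exactly a family of balanced transportation
problems, one for each `c : C`, and a witness `T` is a family of their solutions; conversely a
single transportation problem is the case `C = Unit`. Positivity handles the degenerate fibers
with an empty side, which `TransportationProperty` excludes: there all marginals vanish.
-/

/-- A positive commutative monoid `K` has the transportation property if every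
balanced instance of the transportation problem over `K` has a solution. -/
def TransportationProperty (K : Type*) [AddCommMonoid K] : Prop :=
  ∀ (m n : ℕ), 0 < m → 0 < n → ∀ (b : Fin m → K) (c : Fin n → K),
    ∑ i, b i = ∑ j, c j →
    ∃ d : Fin m → Fin n → K,
      (∀ i, ∑ j, d i j = b i) ∧ (∀ j, ∑ i, d i j = c j)

section

variable {K : Type*} [AddCommMonoid K]

lemma subsingleton_addUnits_of_add_eq_zero (hpos : ∀ p q : K, p + q = 0 → p = 0 ∧ q = 0) :
    Subsingleton (AddUnits K) :=
  Subsingleton.addUnits_of_isAddUnit fun _ ⟨u, hu⟩ ↦ hu ▸ (hpos _ _ u.add_neg).1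

namespace TransportationProperty

variable {ι κ : Type*} [Fintype ι] [Fintype κ]

theorem exists_transport_of_nonempty (hK : TransportationProperty K) [Nonempty ι] [Nonempty κ]
    (b : ι → K) (c : κ → K) (hbc : ∑ i, b i = ∑ j, c j) :
    ∃ d : ι → κ → K, (∀ i, ∑ j, d i j = b i) ∧ (∀ j, ∑ i, d i j = c j) := by
  let eι := Fintype.equivFin ι
  let eκ := Fintype.equivFin κ
  obtain ⟨d, hrow, hcol⟩ :=
    hK _ _ Fintype.card_pos Fintype.card_pos (b ∘ eι.symm) (c ∘ eκ.symm)
      (by simpa only [Function.comp_def, Equiv.sum_comp] using hbc)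
  refine ⟨fun i j ↦ d (eι i) (eκ j), fun i ↦ ?_, fun j ↦ ?_⟩
  · simpa using (Equiv.sum_comp eκ (d (eι i))).trans (hrow (eι i))
  · simpa using (Equiv.sum_comp eι (d · (eκ j))).trans (hcol (eκ j))

theorem exists_transport (hK : TransportationProperty K) [Subsingleton (AddUnits K)]
    (b : ι → K) (c : κ → K) (hbc : ∑ i, b i = ∑ j, c j) :
    ∃ d : ι → κ → K, (∀ i, ∑ j, d i j = b i) ∧ (∀ j, ∑ i, d i j = c j) := by
  rcases isEmpty_or_nonempty ι with hι | hι
  · have hc : ∀ j, c j = 0 := fun j ↦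
      Finset.sum_eq_zero_iff.1 (by simpa using hbc.symm) j (Finset.mem_univ j)
    exact ⟨0, isEmptyElim, fun j ↦ by simp [hc j]⟩
  rcases isEmpty_or_nonempty κ with hκ | hκ
  · have hb : ∀ i, b i = 0 := fun i ↦
      Finset.sum_eq_zero_iff.1 (by simpa using hbc) i (Finset.mem_univ i)
    exact ⟨0, fun i ↦ by simp [hb i], isEmptyElim⟩
  exact hK.exists_transport_of_nonempty b c hbc

end TransportationProperty

end

/-- a positive commutative monoid has the transportation property
iff the inner consistency property holds for `K`-relations. -/
theorem transportation_iff_innerConsistency (K : Type*) [AddCommMonoid K]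
    (hpos : ∀ p q : K, p + q = 0 → p = 0 ∧ q = 0) :
    TransportationProperty K ↔
      ∀ (A B C : Type) [Fintype A] [Fintype B] [Fintype C]
        (R : A × C → K) (S : B × C → K),
        (∀ c : C, ∑ a : A, R (a, c) = ∑ b : B, S (b, c)) →
        ∃ T : A × B × C → K,
          (∀ (a : A) (c : C), ∑ b : B, T (a, b, c) = R (a, c)) ∧
          (∀ (b : B) (c : C), ∑ a : A, T (a, b, c) = S (b, c)) := by
  have := subsingleton_addUnits_of_add_eq_zero hpos
  constructor
  · intro hK A B C _ _ _ R S hRS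
    choose d hrow hcol using fun c ↦
      hK.exists_transport (fun a ↦ R (a, c)) (fun b ↦ S (b, c)) (hRS c)
    exact ⟨fun ⟨a, b, c⟩ ↦ d c a b, fun a c ↦ hrow c a, fun b c ↦ hcol c b⟩
  · intro hcons m n _ _ b c hbc
    obtain ⟨T, hrow, hcol⟩ :=
      hcons (Fin m) (Fin n) Unit (fun p ↦ b p.1) (fun p ↦ c p.1) fun _ ↦ hbc
    exact ⟨fun i j ↦ T (i, j, ()), fun i ↦ hrow i (), fun j ↦ hcol j ()⟩
end

section
/- Let K be a positive commutative monoid. Then K has the transportation property if and only if the path-of-length-3 schema has the local-to-global consistency property for K-relations; that is, if and only if for all finite types A, B, C, D, every triple of K-relations R1 : A × B → K, R2 : B × C → K, R3 : C × D → K that is pairwise consistent is globally consistent. -/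
open Finset

section

variable {K : Type*} [AddCommMonoid K]

def RieszRefinement (K : Type*) [AddCommMonoid K] : Prop :=
  ∀ p q r s : K, p + q = r + s →
    ∃ x₁₁ x₁₂ x₂₁ x₂₂ : K, x₁₁ + x₁₂ = p ∧ x₂₁ + x₂₂ = q ∧ x₁₁ + x₂₁ = r ∧ x₁₂ + x₂₂ = s

def PathThreeLocalToGlobal (K : Type*) [AddCommMonoid K] : Prop :=
  ∀ (A B C D : Type) [Fintype A] [Fintype B] [Fintype C] [Fintype D]
    (R1 : A × B → K) (R2 : B × C → K) (R3 : C × D → K),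
    (∃ W12 : A × B × C → K,
      (∀ (a : A) (b : B), ∑ c : C, W12 (a, b, c) = R1 (a, b)) ∧
      (∀ (b : B) (c : C), ∑ a : A, W12 (a, b, c) = R2 (b, c))) →
    (∃ W23 : B × C × D → K,
      (∀ (b : B) (c : C), ∑ d : D, W23 (b, c, d) = R2 (b, c)) ∧
      (∀ (c : C) (d : D), ∑ b : B, W23 (b, c, d) = R3 (c, d))) →
    (∃ W13 : A × B × C × D → K,
      (∀ (a : A) (b : B), ∑ c : C, ∑ d : D, W13 (a, b, c, d) = R1 (a, b)) ∧
      (∀ (c : C) (d : D), ∑ a : A, ∑ b : B, W13 (a, b, c, d) = R3 (c, d))) →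
    ∃ W : A × B × C × D → K,
      (∀ (a : A) (b : B), ∑ c : C, ∑ d : D, W (a, b, c, d) = R1 (a, b)) ∧
      (∀ (b : B) (c : C), ∑ a : A, ∑ d : D, W (a, b, c, d) = R2 (b, c)) ∧
      (∀ (c : C) (d : D), ∑ a : A, ∑ b : B, W (a, b, c, d) = R3 (c, d))

theorem eq_zero_of_sum_eq_zero_of_positive (hpos : ∀ p q : K, p + q = 0 → p = 0 ∧ q = 0)
    {ι : Type*} [Fintype ι] {f : ι → K} (h : ∑ i, f i = 0) (i : ι) : f i = 0 := by
  classical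
  rw [← add_sum_erase _ _ (mem_univ i)] at h
  exact (hpos _ _ h).1

theorem TransportationProperty.rieszRefinement (hT : TransportationProperty K) :
    RieszRefinement K := by
  intro p q r s h
  obtain ⟨d, hrow, hcol⟩ := hT 2 2 two_pos two_pos ![p, q] ![r, s] (by simpa using h)
  refine ⟨d 0 0, d 0 1, d 1 0, d 1 1, ?_, ?_, ?_, ?_⟩
  · simpa using hrow 0
  · simpa using hrow 1
  · simpa using hcol 0
  · simpa using hcol 1

namespace RieszRefinement

variable (hpos : ∀ p q : K, p + q = 0 → p = 0 ∧ q = 0) (hR : RieszRefinement K)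
include hpos hR

theorem exists_split_fin {n : ℕ} {x y : K} {c : Fin n → K} (h : x + y = ∑ j, c j) :
    ∃ u v : Fin n → K, (∀ j, u j + v j = c j) ∧ ∑ j, u j = x ∧ ∑ j, v j = y := by
  induction n generalizing x y with
  | zero =>
    obtain ⟨rfl, rfl⟩ := hpos x y (by simpa using h)
    exact ⟨0, 0, finZeroElim, by simp, by simp⟩
  | succ n ih =>
    rw [Fin.sum_univ_succ] at h
    obtain ⟨x₀, x', y₀, y', hx, hy, h₀, h'⟩ := hR _ _ _ _ h
    obtain ⟨u, v, huv, hu, hv⟩ := ih (c := fun j => c j.succ) h'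
    refine ⟨Fin.cons x₀ u, Fin.cons y₀ v, Fin.cases h₀ huv, ?_, ?_⟩
    · rw [Fin.sum_univ_succ, ← hx]; simp [hu]
    · rw [Fin.sum_univ_succ, ← hy]; simp [hv]

theorem exists_coupling_fin {m n : ℕ} {b : Fin m → K} {c : Fin n → K}
    (h : ∑ i, b i = ∑ j, c j) :
    ∃ d : Fin m → Fin n → K, (∀ i, ∑ j, d i j = b i) ∧ ∀ j, ∑ i, d i j = c j := by
  induction m generalizing c with
  | zero =>
    refine ⟨finZeroElim, finZeroElim, fun j => ?_⟩
    simpa using (eq_zero_of_sum_eq_zero_of_positive hpos (by simpa using h.symm) j).symm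
  | succ m ih =>
    rw [Fin.sum_univ_succ] at h
    obtain ⟨u, v, huv, hu, hv⟩ := exists_split_fin hpos hR h
    obtain ⟨d, hrow, hcol⟩ := ih (b := fun i => b i.succ) hv.symm
    refine ⟨Fin.cons u d, Fin.cases (by simpa using hu) (by simpa using hrow), fun j => ?_⟩
    simp [Fin.sum_univ_succ, hcol, huv]

theorem transportationProperty : TransportationProperty K :=
  fun _ _ _ _ _ _ h => exists_coupling_fin hpos hR h

theorem exists_coupling {ι κ : Type*} [Fintype ι] [Fintype κ] {b : ι → K} {c : κ → K}
    (h : ∑ i, b i = ∑ j, c j) :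
    ∃ d : ι → κ → K, (∀ i, ∑ j, d i j = b i) ∧ ∀ j, ∑ i, d i j = c j := by
  let e := Fintype.equivFin ι
  let f := Fintype.equivFin κ
  obtain ⟨d, hrow, hcol⟩ := exists_coupling_fin hpos hR (b := b ∘ e.symm) (c := c ∘ f.symm)
    (by simpa only [Function.comp_def, e.symm.sum_comp, f.symm.sum_comp] using h)
  refine ⟨fun i j => d (e i) (f j), fun i => ?_, fun j => ?_⟩
  · simpa [f.sum_comp (d (e i))] using hrow (e i)
  · simpa [e.sum_comp (d · (f j))] using hcol (f j)

theorem pathThreeLocalToGlobal : PathThreeLocalToGlobal K := by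
  intro A B C D _ _ _ _ R1 R2 R3 ⟨W12, h12₁, h12₂⟩ ⟨W23, h23₂, h23₃⟩ _
  have hfibre (b : B) (c : C) : ∃ T : A → D → K,
      (∀ a, ∑ d, T a d = W12 (a, b, c)) ∧ ∀ d, ∑ a, T a d = W23 (b, c, d) :=
    exists_coupling hpos hR ((h12₂ b c).trans (h23₂ b c).symm)
  choose T hT₁ hT₂ using hfibre
  refine ⟨fun x => T x.2.1 x.2.2.1 x.1 x.2.2.2, fun a b => ?_, fun b c => ?_, fun c d => ?_⟩
  · simp only [hT₁, h12₁]
  · simp only [hT₁, h12₂]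
  · simp only [sum_comm (γ := A), hT₂, h23₃]

end RieszRefinement

theorem PathThreeLocalToGlobal.rieszRefinement (H : PathThreeLocalToGlobal K)
    (hpos : ∀ p q : K, p + q = 0 → p = 0 ∧ q = 0) : RieszRefinement K := by
  intro p q r s h
  /- `R1` has columns `(p, q)` and `(r, s)`, `R3` has rows `(r, s)` and `(p, q)`, and `R2` is
  diagonal with mass `p + q`. Since `R1 (·, b) = R3 (!b, ·)`, the three pairwise witnesses exist;
  positivity makes a global witness vanish off `b = c`, so it couples `(p, q)` with `(r, s)`. -/
  let R1 : Bool × Bool → K := fun x => cond x.2 (cond x.1 s r) (cond x.1 q p)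
  let R2 : Bool × Bool → K := fun x => if x.1 = x.2 then p + q else 0
  let R3 : Bool × Bool → K := fun x => cond x.1 (cond x.2 q p) (cond x.2 s r)
  obtain ⟨W, hW₁, hW₂, hW₃⟩ := H Bool Bool Bool Bool R1 R2 R3
    ⟨fun x => if x.2.1 = x.2.2 then R1 (x.1, x.2.1) else 0,
      by intro a b; cases a <;> cases b <;> simp [R1],
      by intro b c; cases b <;> cases c <;> simp [R1, R2, h, add_comm]⟩
    ⟨fun x => if x.1 = x.2.1 then R3 (x.2.1, x.2.2) else 0,
      by intro b c; cases b <;> cases c <;> simp [R2, R3, h, add_comm],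
      by intro c d; cases c <;> cases d <;> simp [R3]⟩
    ⟨fun x => if x.2.2.1 = !x.2.1 ∧ x.2.2.2 = x.1 then R1 (x.1, x.2.1) else 0,
      by intro a b; cases a <;> cases b <;> simp [R1],
      by intro c d; cases c <;> cases d <;> simp [R1, R3]⟩
  have hoff (a b c d : Bool) (hbc : b ≠ c) : W (a, b, c, d) = 0 := by
    have h₀ : ∑ a, ∑ d, W (a, b, c, d) = 0 := by simpa [R2, hbc] using hW₂ b c
    exact eq_zero_of_sum_eq_zero_of_positive hpos
      (eq_zero_of_sum_eq_zero_of_positive hpos h₀ a) d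
  have hp := hW₁ false false
  have hq := hW₁ true false
  have hr := hW₃ false false
  have hs := hW₃ false true
  simp only [Fintype.sum_bool, ne_eq, Bool.false_eq_true, Bool.true_eq_false, not_false_eq_true,
    hoff, add_zero, zero_add, cond_false, cond_true, R1, R3] at hp hq hr hs
  exact ⟨W (false, false, false, false), W (false, false, false, true),
    W (true, false, false, false), W (true, false, false, true),
    (add_comm _ _).trans hp, (add_comm _ _).trans hq, (add_comm _ _).trans hr,
    (add_comm _ _).trans hs⟩

end

/-- `K` has the transportation property iff the path-of-length-3
schema has the local-to-global consistency property for `K`-relations. -/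
theorem transportation_iff_pathThree (K : Type*) [AddCommMonoid K]
    (hpos : ∀ p q : K, p + q = 0 → p = 0 ∧ q = 0) :
    TransportationProperty K ↔
      ∀ (A B C D : Type) [Fintype A] [Fintype B] [Fintype C] [Fintype D]
        (R1 : A × B → K) (R2 : B × C → K) (R3 : C × D → K),
        -- pairwise consistency
        (∃ W12 : A × B × C → K,
          (∀ (a : A) (b : B), ∑ c : C, W12 (a, b, c) = R1 (a, b)) ∧
          (∀ (b : B) (c : C), ∑ a : A, W12 (a, b, c) = R2 (b, c))) →
        (∃ W23 : B × C × D → K,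
          (∀ (b : B) (c : C), ∑ d : D, W23 (b, c, d) = R2 (b, c)) ∧
          (∀ (c : C) (d : D), ∑ b : B, W23 (b, c, d) = R3 (c, d))) →
        (∃ W13 : A × B × C × D → K,
          (∀ (a : A) (b : B), ∑ c : C, ∑ d : D, W13 (a, b, c, d) = R1 (a, b)) ∧
          (∀ (c : C) (d : D), ∑ a : A, ∑ b : B, W13 (a, b, c, d) = R3 (c, d))) →
        -- global consistency
        ∃ W : A × B × C × D → K,
          (∀ (a : A) (b : B), ∑ c : C, ∑ d : D, W (a, b, c, d) = R1 (a, b)) ∧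
          (∀ (b : B) (c : C), ∑ a : A, ∑ d : D, W (a, b, c, d) = R2 (b, c)) ∧
          (∀ (c : C) (d : D), ∑ a : A, ∑ b : B, W (a, b, c, d) = R3 (c, d)) :=
  ⟨fun hT => hT.rieszRefinement.pathThreeLocalToGlobal hpos,
    fun H => (PathThreeLocalToGlobal.rieszRefinement H hpos).transportationProperty hpos⟩
end

section
/- Let K be a positive commutative monoid with the transportation property. Let m ≥ 1, let A_0, A_1, ..., A_m be nonempty finite types, and for each i ∈ {1,...,m} let R_i : A_{i-1} × A_i → K be a K-relation. Suppose the collection is pairwise consistent: for every pair of indices i < j there exists W : (∏_{k=0}^m A_k) → K whose marginal on coordinates (i-1,i) equals R_i and whose marginal on coordinates (j-1,j) equals R_j. Then the collection is globally consistent: there exists W : (∏_{k=0}^m A_k) → K whose marginal on coordinates (i-1,i) equals R_i for every i ∈ {1,...,m}. -/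
section

open Finset Function

variable {K : Type*} [AddCommMonoid K]

def marginal {T Y : Type*} [Fintype T] [DecidableEq Y] (W : T → K) (f : T → Y) (y : Y) : K :=
  ∑ t with f t = y, W t

section Marginal

variable {T Y Z : Type*} [Fintype T] [DecidableEq Y] [DecidableEq Z]

theorem marginal_eq_sum_ite (W : T → K) (f : T → Y) (y : Y) :
    marginal W f y = ∑ t, if f t = y then W t else 0 :=
  sum_filter _ _

theorem sum_marginal_pair_left [Fintype Y] (W : T → K) (f : T → Y) (g : T → Z) (z : Z) :
    ∑ y, marginal W (fun t => (f t, g t)) (y, z) = marginal W g z := by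
  simp only [marginal_eq_sum_ite, Prod.mk.injEq, ite_and]
  rw [sum_comm]
  simp

theorem sum_marginal_pair_right [Fintype Z] (W : T → K) (f : T → Y) (g : T → Z) (y : Y) :
    ∑ z, marginal W (fun t => (f t, g t)) (y, z) = marginal W f y := by
  simp only [marginal_eq_sum_ite, Prod.mk.injEq, ite_and]
  rw [sum_comm]
  simp

end Marginal

namespace TransportationProperty

theorem exists_of_fintype (htp : TransportationProperty K) {ι κ : Type*} [Fintype ι] [Fintype κ]
    [Nonempty ι] [Nonempty κ] (b : ι → K) (c : κ → K) (h : ∑ i, b i = ∑ j, c j) :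
    ∃ d : ι → κ → K, (∀ i, ∑ j, d i j = b i) ∧ ∀ j, ∑ i, d i j = c j := by
  let e := Fintype.equivFin ι
  let e' := Fintype.equivFin κ
  obtain ⟨d, hrow, hcol⟩ := htp _ _ Fintype.card_pos Fintype.card_pos (b ∘ e.symm) (c ∘ e'.symm)
    (by simpa only [comp_apply, Equiv.sum_comp] using h)
  refine ⟨fun i j => d (e i) (e' j), fun i => ?_, fun j => ?_⟩
  · simpa [e'.sum_comp (d (e i))] using hrow (e i)
  · simpa [e.sum_comp (d · (e' j))] using hcol (e' j)

theorem exists_fiberwise (htp : TransportationProperty K) {T Y B : Type*} [Fintype T]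
    [DecidableEq Y] [Fintype B] [Nonempty B] {f : T → Y} (hf : Surjective f) (W : T → K)
    (R : Y × B → K) (hbal : ∀ y, marginal W f y = ∑ b, R (y, b)) :
    ∃ D : T → B → K, (∀ t, ∑ b, D t b = W t) ∧ ∀ y b, marginal (D · b) f y = R (y, b) := by
  have hfiber (y : Y) : Nonempty {t // f t = y} := let ⟨t, ht⟩ := hf y; ⟨⟨t, ht⟩⟩
  have hsub (y : Y) (V : T → K) : marginal V f y = ∑ s : {t // f t = y}, V s :=
    sum_subtype _ (by simp) _
  choose d hrow hcol using fun y => htp.exists_of_fintype (fun s : {t // f t = y} => W s)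
    (fun b => R (y, b)) (by rw [← hsub, hbal])
  refine ⟨fun t => d (f t) ⟨t, rfl⟩, fun t => hrow _ _, fun y b => ?_⟩
  rw [hsub, ← hcol]
  exact sum_congr rfl fun ⟨t, ht⟩ _ => by subst ht; rfl

end TransportationProperty

section Glue

variable {ι : Type*} [Fintype ι] [DecidableEq ι] {A : ι → Type*} [∀ k, Fintype (A k)]

/-- `D t b` is the share of the mass of the tuple `t` that is moved to the value `b` at
coordinate `j`. -/
def glue (j : ι) (D : (∀ k, A k) → A j → K) (s : ∀ k, A k) : K :=
  ∑ u, D (update s j u) (s j)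

/-- `(t, b) ↦ (update t j b, t j)` is an involution of `(∀ k, A k) × A j`; reindexing by it
turns the double sum defining the marginal of `glue j D` into a sum over the entries of `D`. -/
theorem marginal_glue {Z : Type*} [DecidableEq Z] (j : ι) (D : (∀ k, A k) → A j → K)
    (g : (∀ k, A k) → Z) (z : Z) :
    marginal (glue j D) g z = ∑ t, ∑ b, if g (update t j b) = z then D t b else 0 := by
  have hσ : Involutive fun p : (∀ k, A k) × A j => (update p.1 j p.2, p.1 j) :=
    fun ⟨t, b⟩ => by simp
  rw [marginal_eq_sum_ite]
  simp only [glue, ite_sum_zero]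
  rw [← Fintype.sum_prod_type' (fun s u => if g s = z then D (update s j u) (s j) else 0),
    ← Fintype.sum_prod_type', ← Equiv.sum_comp (hσ.toPerm _)]
  simp

theorem marginal_glue_of_update_eq {Z : Type*} [DecidableEq Z] {j : ι}
    (D : (∀ k, A k) → A j → K) {g : (∀ k, A k) → Z} (hg : ∀ t b, g (update t j b) = g t) :
    marginal (glue j D) g = marginal (fun t => ∑ b, D t b) g := by
  ext z
  rw [marginal_glue, marginal_eq_sum_ite]
  simp only [hg, ite_sum_zero]

theorem marginal_glue_pair {Y : Type*} [DecidableEq Y] [∀ k, DecidableEq (A k)] {j : ι}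
    (D : (∀ k, A k) → A j → K) {f : (∀ k, A k) → Y} (hf : ∀ t b, f (update t j b) = f t)
    (y : Y) (b : A j) :
    marginal (glue j D) (fun t => (f t, t j)) (y, b) = marginal (D · b) f y := by
  rw [marginal_glue, marginal_eq_sum_ite]
  simp only [hf, update_self, Prod.mk.injEq, ite_and, ← ite_sum_zero, sum_ite_eq', mem_univ,
    if_true]

theorem exists_marginal_eq [∀ k, DecidableEq (A k)] [∀ k, Nonempty (A k)] (j : ι)
    (ρ : A j → K) : ∃ W : (∀ k, A k) → K, marginal W (· j) = ρ := by
  let a : ∀ k, A k := fun k => Classical.arbitrary _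
  refine ⟨fun t => ∑ b, if update a j b = t then ρ b else 0, funext fun b => ?_⟩
  rw [marginal, sum_comm]
  simp

end Glue

theorem TransportationProperty.exists_extension (htp : TransportationProperty K)
    {ι : Type*} [Fintype ι] [DecidableEq ι] {A : ι → Type*} [∀ k, Fintype (A k)]
    [∀ k, DecidableEq (A k)] [∀ k, Nonempty (A k)] (j : ι) {Y : Type*} [DecidableEq Y]
    {f : (∀ k, A k) → Y} (hf : Surjective f) (hfj : ∀ t b, f (update t j b) = f t)
    (W : (∀ k, A k) → K) (R : Y × A j → K) (hbal : ∀ y, marginal W f y = ∑ b, R (y, b)) :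
    ∃ W' : (∀ k, A k) → K, marginal W' (fun t => (f t, t j)) = R ∧
      ∀ {Z : Type*} [DecidableEq Z] (g : (∀ k, A k) → Z),
        (∀ t b, g (update t j b) = g t) → marginal W' g = marginal W g := by
  obtain ⟨D, hrow, hcol⟩ := htp.exists_fiberwise hf W R hbal
  refine ⟨glue j D, funext fun ⟨y, b⟩ => ?_, fun g hg => ?_⟩
  · rw [marginal_glue_pair D hfj, hcol]
  · rw [marginal_glue_of_update_eq D hg]
    simp only [hrow]

section Path

variable {m : ℕ} {A : Fin (m + 1) → Type*} [∀ k, Fintype (A k)] [∀ k, DecidableEq (A k)]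

def edgeMarginal (W : (∀ k, A k) → K) (i : Fin m) : A i.castSucc × A i.succ → K :=
  marginal W fun t => (t i.castSucc, t i.succ)

theorem edgeMarginal_eq_iff (W : (∀ k, A k) → K) (i : Fin m) (S : A i.castSucc × A i.succ → K) :
    edgeMarginal W i = S ↔ ∀ x y,
      (∑ t, if t i.castSucc = x ∧ t i.succ = y then W t else 0) = S (x, y) := by
  simp only [funext_iff, Prod.forall, edgeMarginal, marginal_eq_sum_ite, Prod.mk.injEq]

theorem marginal_castSucc_of_edgeMarginal_eq {W : (∀ k, A k) → K} {i : Fin m}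
    {S : A i.castSucc × A i.succ → K} (h : edgeMarginal W i = S) :
    marginal W (· i.castSucc) = fun x => ∑ y, S (x, y) :=
  funext fun x => by rw [← h, edgeMarginal, sum_marginal_pair_right]

theorem marginal_succ_of_edgeMarginal_eq {W : (∀ k, A k) → K} {i : Fin m}
    {S : A i.castSucc × A i.succ → K} (h : edgeMarginal W i = S) :
    marginal W (· i.succ) = fun y => ∑ x, S (x, y) :=
  funext fun y => by rw [← h, edgeMarginal, sum_marginal_pair_left]

theorem TransportationProperty.exists_edgeMarginal_eq (htp : TransportationProperty K)
    [∀ k, Nonempty (A k)] (i : Fin m) (W : (∀ k, A k) → K) (S : A i.castSucc × A i.succ → K)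
    (hW : marginal W (· i.castSucc) = fun x => ∑ y, S (x, y)) :
    ∃ W' : (∀ k, A k) → K, edgeMarginal W' i = S ∧
      ∀ i' < i, edgeMarginal W' i' = edgeMarginal W i' := by
  obtain ⟨W', hS, hW'⟩ := htp.exists_extension i.succ (surjective_eval i.castSucc)
    (fun t b => update_of_ne (Fin.castSucc_lt_succ (i := i)).ne _ _) W S (congrFun hW)
  refine ⟨W', hS, fun i' hi' => hW' _ fun t b => ?_⟩
  have h₂ : i'.succ < i.succ := Fin.succ_lt_succ_iff.2 hi'
  have h₁ : i'.castSucc < i.succ := Fin.castSucc_lt_succ.trans h₂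
  simp only [update_of_ne h₁.ne, update_of_ne h₂.ne]

theorem sum_fst_eq_sum_snd_of_edgeMarginal_eq {W : (∀ k, A k) → K} {i : Fin m}
    (h : i.val + 1 < m) {S : A i.castSucc × A i.succ → K}
    {S' : A (Fin.castSucc ⟨i + 1, h⟩) × A (Fin.succ ⟨i + 1, h⟩) → K}
    (hS : edgeMarginal W i = S) (hS' : edgeMarginal W ⟨i + 1, h⟩ = S') :
    (fun y => ∑ x, S (x, y)) = fun y => ∑ z, S' (y, z) :=
  (marginal_succ_of_edgeMarginal_eq hS).symm.trans (marginal_castSucc_of_edgeMarginal_eq hS')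

theorem TransportationProperty.exists_edgeMarginal_eq_on_prefix (htp : TransportationProperty K)
    [∀ k, Nonempty (A k)] (hm : 1 ≤ m) (R : (i : Fin m) → A i.castSucc × A i.succ → K)
    (hadj : ∀ (i : Fin m) (h : i.val + 1 < m),
      (fun y => ∑ x, R i (x, y)) = fun y => ∑ z, R ⟨i + 1, h⟩ (y, z)) :
    ∀ r ≤ m, ∃ W : (∀ k, A k) → K, (∀ i : Fin m, i.val < r → edgeMarginal W i = R i) ∧
      ∀ i : Fin m, i.val = r → marginal W (· i.castSucc) = fun x => ∑ y, R i (x, y) := by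
  intro r hr
  induction r with
  | zero =>
    obtain ⟨W, hW⟩ := exists_marginal_eq (Fin.castSucc ⟨0, hm⟩) fun x => ∑ y, R ⟨0, hm⟩ (x, y)
    exact ⟨W, by simp, fun i hi => by obtain rfl : i = ⟨0, hm⟩ := Fin.ext hi; exact hW⟩
  | succ r ih =>
    obtain ⟨W, hW, hr'⟩ := ih (by omega)
    let i : Fin m := ⟨r, hr⟩
    obtain ⟨W', hi, hlt⟩ := htp.exists_edgeMarginal_eq i W (R i) (hr' i rfl)
    refine ⟨W', fun i' hi' => ?_, fun ⟨_, hj⟩ hj' => ?_⟩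
    · obtain h | h := Nat.lt_succ_iff_lt_or_eq.1 hi'
      · rw [hlt i' h, hW i' h]
      · obtain rfl : i' = i := Fin.ext h
        exact hi
    · obtain rfl : _ = r + 1 := hj'
      exact (marginal_succ_of_edgeMarginal_eq hi).trans (hadj i hj)

end Path

end

theorem path_localToGlobal_general (K : Type*) [AddCommMonoid K]
    (htp : TransportationProperty K)
    (m : ℕ) (hm : 1 ≤ m)
    (A : Fin (m + 1) → Type) [∀ k, Fintype (A k)] [∀ k, DecidableEq (A k)]
    [∀ k, Nonempty (A k)]
    (R : (i : Fin m) → A i.castSucc × A i.succ → K)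
    (hpair : ∀ i j : Fin m, i < j →
      ∃ W : ((k : Fin (m + 1)) → A k) → K,
        (∀ (x : A i.castSucc) (y : A i.succ),
          (∑ t : (k : Fin (m + 1)) → A k,
            if t i.castSucc = x ∧ t i.succ = y then W t else 0) = R i (x, y)) ∧
        (∀ (x : A j.castSucc) (y : A j.succ),
          (∑ t : (k : Fin (m + 1)) → A k,
            if t j.castSucc = x ∧ t j.succ = y then W t else 0) = R j (x, y))) :
    ∃ W : ((k : Fin (m + 1)) → A k) → K,
      ∀ (i : Fin m) (x : A i.castSucc) (y : A i.succ),
        (∑ t : (k : Fin (m + 1)) → A k,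
          if t i.castSucc = x ∧ t i.succ = y then W t else 0) = R i (x, y) := by
  simp only [← edgeMarginal_eq_iff] at hpair ⊢
  have hadj (i : Fin m) (h : i.val + 1 < m) :
      (fun y => ∑ x, R i (x, y)) = fun y => ∑ z, R ⟨i + 1, h⟩ (y, z) :=
    let ⟨_, hi, hi'⟩ := hpair i ⟨i + 1, h⟩ (Nat.lt_succ_self _)
    sum_fst_eq_sum_snd_of_edgeMarginal_eq h hi hi'
  obtain ⟨W, hW, -⟩ := htp.exists_edgeMarginal_eq_on_prefix hm R hadj m le_rfl
  exact ⟨W, fun i => hW i i.isLt⟩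

/-- over a positive commutative monoid with the transportation
property, every pairwise consistent collection of `K`-relations on the path
schema `{A_0,A_1}, {A_1,A_2}, ..., {A_{m-1},A_m}` is globally consistent. -/
theorem path_localToGlobal (K : Type*) [AddCommMonoid K]
    (hpos : ∀ p q : K, p + q = 0 → p = 0 ∧ q = 0)
    (htp : TransportationProperty K)
    (m : ℕ) (hm : 1 ≤ m)
    (A : Fin (m + 1) → Type) [∀ k, Fintype (A k)] [∀ k, DecidableEq (A k)]
    [∀ k, Nonempty (A k)]
    (R : (i : Fin m) → A i.castSucc × A i.succ → K)
    (hpair : ∀ i j : Fin m, i < j →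
      ∃ W : ((k : Fin (m + 1)) → A k) → K,
        (∀ (x : A i.castSucc) (y : A i.succ),
          (∑ t : (k : Fin (m + 1)) → A k,
            if t i.castSucc = x ∧ t i.succ = y then W t else 0) = R i (x, y)) ∧
        (∀ (x : A j.castSucc) (y : A j.succ),
          (∑ t : (k : Fin (m + 1)) → A k,
            if t j.castSucc = x ∧ t j.succ = y then W t else 0) = R j (x, y))) :
    ∃ W : ((k : Fin (m + 1)) → A k) → K,
      ∀ (i : Fin m) (x : A i.castSucc) (y : A i.succ),
        (∑ t : (k : Fin (m + 1)) → A k,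
          if t i.castSucc = x ∧ t i.succ = y then W t else 0) = R i (x, y) :=
  path_localToGlobal_general K htp m hm A R hpair
end

section
/- Let K be a commutative semiring that is additively absorptive (p + p·q = p for all p,q ∈ K) and multiplicatively idempotent (p·p = p for all p ∈ K). Let A, B, C be finite types and let R : A × C → K and S : B × C → K be inner consistent K-relations. Then the standard K-join T : A × B × C → K defined by T(a,b,c) = R(a,c) · S(b,c) witnesses their consistency: ∑_{b∈B} T(a,b,c) = R(a,c) for all a ∈ A, c ∈ C, and ∑_{a∈A} T(a,b,c) = S(b,c) for all b ∈ B, c ∈ C. -/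
private lemma absorb_mul_sum {K : Type*} [CommSemiring K]
    (habs : ∀ p q : K, p + p * q = p) (hidem : ∀ p : K, p * p = p)
    (p : K) {ι : Type*} (s : Finset ι) (f : ι → K) (i : ι)
    (hi : i ∈ s) (hf : f i = p) : p * ∑ j ∈ s, f j = p := by
  classical
  rw [← Finset.add_sum_erase s f hi, hf, mul_add, hidem, habs]

/-- over an additively absorptive and multiplicatively idempotent
commutative semiring, the standard `K`-join witnesses the consistency of any
two inner consistent `K`-relations. -/
theorem standardJoin_witnesses (K : Type*) [CommSemiring K]
    (habs : ∀ p q : K, p + p * q = p)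
    (hidem : ∀ p : K, p * p = p)
    (A B C : Type*) [Fintype A] [Fintype B] [Fintype C]
    (R : A × C → K) (S : B × C → K)
    (hinner : ∀ c : C, ∑ a : A, R (a, c) = ∑ b : B, S (b, c)) :
    (∀ (a : A) (c : C), ∑ b : B, R (a, c) * S (b, c) = R (a, c)) ∧
    (∀ (b : B) (c : C), ∑ a : A, R (a, c) * S (b, c) = S (b, c)) := by
  constructor
  · intro a c
    rw [← Finset.mul_sum, ← hinner c]
    exact absorb_mul_sum habs hidem (R (a, c)) Finset.univ (fun a' => R (a', c)) a (Finset.mem_univ a) rfl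
  · intro b c
    have : ∀ a : A, R (a, c) * S (b, c) = S (b, c) * R (a, c) := fun a => mul_comm _ _
    simp_rw [this]
    rw [← Finset.mul_sum, hinner c]
    exact absorb_mul_sum habs hidem (S (b, c)) Finset.univ (fun b' => S (b', c)) b (Finset.mem_univ b) rfl
end

section
/- Let K be a commutative semiring whose additive monoid is positive (p + q = 0 implies p = 0 and q = 0). Suppose that for all finite types A, B, C and all inner consistent K-relations R : A × C → K and S : B × C → K, the standard K-join T(a,b,c) = R(a,c) · S(b,c) witnesses their consistency, i.e., ∑_{b∈B} T(a,b,c) = R(a,c) for all a,c and ∑_{a∈A} T(a,b,c) = S(b,c) for all b,c. Then K is additively absorptive (p + p·q = p for all p,q ∈ K) and multiplicatively idempotent (p·p = p for all p ∈ K). -/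
/-- if the standard `K`-join always witnesses the consistency of
inner consistent `K`-relations over an additively positive commutative
semiring, then `K` is additively absorptive and multiplicatively idempotent. -/
theorem standardJoin_witnesses_converse (K : Type*) [CommSemiring K]
    (hpos : ∀ p q : K, p + q = 0 → p = 0 ∧ q = 0)
    (hjoin : ∀ (A B C : Type) [Fintype A] [Fintype B] [Fintype C]
      (R : A × C → K) (S : B × C → K),
      (∀ c : C, ∑ a : A, R (a, c) = ∑ b : B, S (b, c)) →
      (∀ (a : A) (c : C), ∑ b : B, R (a, c) * S (b, c) = R (a, c)) ∧
      (∀ (b : B) (c : C), ∑ a : A, R (a, c) * S (b, c) = S (b, c))) :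
    (∀ p q : K, p + p * q = p) ∧ (∀ p : K, p * p = p) := by
  have hid : ∀ p : K, p * p = p := by
    intro p
    have h := hjoin Unit Unit Unit (fun _ => p) (fun _ => p) (fun c => rfl)
    simpa using h.1 () ()
  refine ⟨?_, hid⟩
  intro p q
  have h := hjoin (Fin 2) Unit Unit (fun x => if x.1 = 0 then p else q)
      (fun _ => p + q) (by intro c; simp [Fin.sum_univ_two])
  have h0 := h.1 0 ()
  simp [mul_add, hid p] at h0
  simpa using h0
end

section
/- Let K be a (commutative) semifield whose additive monoid is positive (p + q = 0 implies p = 0 and q = 0), where division by zero is defined to be zero. Let A, B, C be finite types and let R : A × C → K and S : B × C → K be inner consistent K-relations. Then the Vorob'ev K-join T : A × B × C → K defined by T(a,b,c) = R(a,c) · S(b,c) / (∑_{a'∈A} R(a',c)) witnesses their consistency: ∑_{b∈B} T(a,b,c) = R(a,c) for all a ∈ A, c ∈ C, and ∑_{a∈A} T(a,b,c) = S(b,c) for all b ∈ B, c ∈ C. -/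
lemma sum_eq_zero_imp {K : Type*} [Semifield K]
    (hpos : ∀ p q : K, p + q = 0 → p = 0 ∧ q = 0)
    {ι : Type*} (s : Finset ι) (f : ι → K) (h : ∑ i ∈ s, f i = 0) :
    ∀ i ∈ s, f i = 0 := by
  induction s using Finset.cons_induction with
  | empty => simp
  | cons a s ha ih =>
    rw [Finset.sum_cons] at h
    obtain ⟨h1, h2⟩ := hpos _ _ h
    intro i hi
    rcases Finset.mem_cons.mp hi with rfl | hi
    · exact h1
    · exact ih h2 i hi

/-- over an additively positive semifield (with the convention
`x / 0 = 0`), the Vorob'ev `K`-join witnesses the consistency of any two inner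
consistent `K`-relations. -/
theorem vorobevJoin_witnesses (K : Type*) [Semifield K]
    (hpos : ∀ p q : K, p + q = 0 → p = 0 ∧ q = 0)
    (A B C : Type*) [Fintype A] [Fintype B] [Fintype C]
    (R : A × C → K) (S : B × C → K)
    (hinner : ∀ c : C, ∑ a : A, R (a, c) = ∑ b : B, S (b, c)) :
    (∀ (a : A) (c : C),
      ∑ b : B, R (a, c) * S (b, c) / (∑ a' : A, R (a', c)) = R (a, c)) ∧
    (∀ (b : B) (c : C),
      ∑ a : A, R (a, c) * S (b, c) / (∑ a' : A, R (a', c)) = S (b, c)) := by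
  constructor
  · intro a c
    by_cases hM : (∑ a' : A, R (a', c)) = 0
    · have hR : R (a, c) = 0 :=
        sum_eq_zero_imp hpos Finset.univ _ hM a (Finset.mem_univ a)
      simp [hM, hR]
    · rw [← Finset.sum_div, ← Finset.mul_sum, ← hinner c,
        mul_div_assoc, div_self hM, mul_one]
  · intro b c
    by_cases hM : (∑ a' : A, R (a', c)) = 0
    · have hS : S (b, c) = 0 :=
        sum_eq_zero_imp hpos Finset.univ _ (by rw [← hinner c]; exact hM) b
          (Finset.mem_univ b)
      simp [hM, hS]
    · rw [← Finset.sum_div, ← Finset.sum_mul, mul_comm,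
        mul_div_assoc, div_self hM, mul_one]
end

section
/- Let K be a positive commutative monoid that is weakly cancellative (for all a,b,c ∈ K, a + b = a + c implies b = c or b = 0 or c = 0) and totally canonically pre-ordered (for all b,c ∈ K, there exists a ∈ K with b + a = c, or there exists a ∈ K with c + a = b). Then K has the transportation property. -/
section Aux
variable {K : Type*} [AddCommMonoid K]

lemma sum_eq_zero_of_pos (hpos : ∀ p q : K, p + q = 0 → p = 0 ∧ q = 0) :
    ∀ (k : ℕ) (f : Fin k → K), ∑ i, f i = 0 → ∀ i, f i = 0 := by
  intro k
  induction k with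
  | zero => intro f _ i; exact i.elim0
  | succ k ih =>
    intro f hf i
    rw [Fin.sum_univ_succ] at hf
    obtain ⟨h0, hs⟩ := hpos _ _ hf
    refine Fin.cases h0 (fun j => ih _ hs j) i

lemma key (hpos : ∀ p q : K, p + q = 0 → p = 0 ∧ q = 0)
    (hwc : ∀ a b c : K, a + b = a + c → b = c ∨ b = 0 ∨ c = 0)
    (htot : ∀ b c : K, (∃ a, b + a = c) ∨ (∃ a, c + a = b)) :
    ∀ (s m n : ℕ), m + n ≤ s → ∀ (b : Fin (m+1) → K) (c : Fin (n+1) → K),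
      ∑ i, b i = ∑ j, c j →
      ∃ d : Fin (m+1) → Fin (n+1) → K,
        (∀ i, ∑ j, d i j = b i) ∧ (∀ j, ∑ i, d i j = c j) := by
  intro s
  induction s with
  | zero =>
    intro m n hmn b c hbc
    obtain ⟨rfl, rfl⟩ : m = 0 ∧ n = 0 := by omega
    refine ⟨fun _ _ => b 0, fun i => ?_, fun j => ?_⟩
    · rw [Fin.sum_univ_one, Fin.fin_one_eq_zero i]
    · rw [Fin.sum_univ_one, Fin.fin_one_eq_zero j]
      simpa [Fin.sum_univ_one] using hbc
  | succ s ih =>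
    intro m n hmn b c hbc
    match m, n with
    | 0, n =>
      refine ⟨fun _ j => c j, fun i => ?_, fun j => Fin.sum_univ_one _⟩
      rw [Fin.fin_one_eq_zero i, ← hbc, Fin.sum_univ_one]
    | m + 1, 0 =>
      refine ⟨fun i _ => b i, fun i => Fin.sum_univ_one _, fun j => ?_⟩
      rw [Fin.fin_one_eq_zero j, hbc, Fin.sum_univ_one]
    | m + 1, n + 1 =>
      set B : K := ∑ i : Fin (m+1), b i.succ with hB
      set C : K := ∑ j : Fin (n+1), c j.succ with hC
      have hbc' : b 0 + B = c 0 + C := by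
        rw [hB, hC, ← Fin.sum_univ_succ, ← Fin.sum_univ_succ]; exact hbc
      -- degenerate solutions
      have rowzero : (∀ i : Fin (m+1), b i.succ = 0) →
          ∃ d : Fin (m+2) → Fin (n+2) → K,
            (∀ i, ∑ j, d i j = b i) ∧ (∀ j, ∑ i, d i j = c j) := by
        intro hz
        refine ⟨Fin.cons c 0, fun i => ?_, fun j => ?_⟩
        · refine Fin.cases ?_ (fun i => ?_) i
          · rw [Fin.cons_zero, ← hbc, Fin.sum_univ_succ,
              Finset.sum_eq_zero fun i _ => hz i, add_zero]
          · simp [hz i]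
        · rw [Fin.sum_univ_succ]
          simp
      have colzero : (∀ j : Fin (n+1), c j.succ = 0) →
          ∃ d : Fin (m+2) → Fin (n+2) → K,
            (∀ i, ∑ j, d i j = b i) ∧ (∀ j, ∑ i, d i j = c j) := by
        intro hz
        refine ⟨fun i => Fin.cons (b i) 0, fun i => ?_, fun j => ?_⟩
        · rw [Fin.sum_cons]; simp
        · refine Fin.cases ?_ (fun j => ?_) j
          · simp only [Fin.cons_zero]
            rw [hbc, Fin.sum_univ_succ,
              Finset.sum_eq_zero fun j _ => hz j, add_zero]
          · simp [hz j]
      rcases htot (b 0) (c 0) with ⟨a, ha⟩ | ⟨a, ha⟩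
      · -- b 0 + a = c 0 : northwest cell gets b 0, reduce rows
        have : b 0 + B = b 0 + (a + C) := by rw [hbc', ← ha, add_assoc]
        rcases hwc _ _ _ this with hBval | hB0 | haC0
        · -- B = a + C : recurse with rows b∘succ, cols (a, c∘succ)
          obtain ⟨d', hrow, hcol⟩ := ih m (n+1) (by omega)
            (fun i => b i.succ) (Fin.cons a fun j => c j.succ)
            (by rw [Fin.sum_cons, ← hB, ← hC, hBval])
          refine ⟨Fin.cons (Fin.cons (b 0) 0) d', fun i => ?_, fun j => ?_⟩
          · refine Fin.cases ?_ (fun i => ?_) i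
            · simp [Fin.sum_cons]
            · simpa using hrow i
          · rw [Fin.sum_univ_succ]
            refine Fin.cases ?_ (fun j => ?_) j
            · simp only [Fin.cons_zero, Fin.cons_succ]
              have := hcol 0
              simp only [Fin.cons_zero] at this
              rw [this, ha]
            · simp only [Fin.cons_succ, Fin.cons_zero]
              have := hcol j.succ
              simp only [Fin.cons_succ] at this
              rw [this]
              simp
        · -- B = 0
          exact rowzero (sum_eq_zero_of_pos hpos _ _ hB0)
        · -- a + C = 0
          exact colzero (sum_eq_zero_of_pos hpos _ _ (hpos _ _ haC0).2)
      · -- c 0 + a = b 0 : northwest cell gets c 0, reduce columns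
        have : c 0 + C = c 0 + (a + B) := by rw [← hbc', ← ha, add_assoc]
        rcases hwc _ _ _ this with hCval | hC0 | haB0
        · -- C = a + B : recurse with rows (a, b∘succ), cols c∘succ
          obtain ⟨d', hrow, hcol⟩ := ih (m+1) n (by omega)
            (Fin.cons a fun i => b i.succ) (fun j => c j.succ)
            (by rw [Fin.sum_cons, ← hB, ← hC, hCval])
          refine ⟨fun i => Fin.cons ((Fin.cons (c 0) (0 : Fin (m+1) → K) : Fin (m+2) → K) i) (d' i), fun i => ?_, fun j => ?_⟩
          · rw [Fin.sum_cons]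
            refine Fin.cases ?_ (fun i => ?_) i
            · have := hrow 0
              simp only [Fin.cons_zero] at this ⊢
              rw [this, ha]
            · have := hrow i.succ
              simp only [Fin.cons_succ] at this ⊢
              rw [this]
              simp
          · refine Fin.cases ?_ (fun j => ?_) j
            · simp [Fin.sum_univ_succ]
            · simp only [Fin.cons_succ]
              exact hcol j
        · -- C = 0
          exact colzero (sum_eq_zero_of_pos hpos _ _ hC0)
        · -- a + B = 0
          exact rowzero (sum_eq_zero_of_pos hpos _ _ (hpos _ _ haB0).2)

end Aux

/-- every positive commutative monoid that is weakly cancellative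
and totally canonically pre-ordered has the transportation property. -/
theorem northwestCorner (K : Type*) [AddCommMonoid K]
    (hpos : ∀ p q : K, p + q = 0 → p = 0 ∧ q = 0)
    (hwc : ∀ a b c : K, a + b = a + c → b = c ∨ b = 0 ∨ c = 0)
    (htot : ∀ b c : K, (∃ a, b + a = c) ∨ (∃ a, c + a = b)) :
    TransportationProperty K := by
  intro m n hm hn b c hbc
  obtain ⟨m', rfl⟩ := Nat.exists_eq_succ_of_ne_zero hm.ne'
  obtain ⟨n', rfl⟩ := Nat.exists_eq_succ_of_ne_zero hn.ne'
  exact key hpos hwc htot (m' + n') m' n' le_rfl b c hbc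
end

section
/- Let K be a positive commutative monoid that is weakly cancellative and totally canonically pre-ordered. Let A, B, C be finite types and let R : A × C → K and S : B × C → K be inner consistent K-relations. Then there exists a witness T : A × B × C → K of their consistency (∑_{b∈B} T(a,b,c) = R(a,c) for all a,c and ∑_{a∈A} T(a,b,c) = S(b,c) for all b,c) whose support is sparse: the number of triples (a,b,c) with T(a,b,c) ≠ 0 is at most the number of pairs (a,c) with R(a,c) ≠ 0 plus the number of pairs (b,c) with S(b,c) ≠ 0. -/
/-!
The problem splits over `c`, so it suffices to couple two vectors `R : α → K`, `S : β → K` with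
equal sums. Pick `a₀`, `b₀` in their supports; by totality `R a₀` and `S b₀` have a common summand
`x` leaving remainder `0` on one side. Put `x` at `T (a₀, b₀)` and subtract it from `R a₀` and
`S b₀`: one support loses a point while `T` gains at most one. Weak cancellativity keeps the sums of
the remainders equal, unless one remainder sums to `0`; by positivity it then vanishes, so `R` or
`S` is a point mass and the witness is a single row or column.
-/

open Finset Function

section SparseWitness

variable {K : Type*} [AddCommMonoid K]

lemma exists_common_summand (htot : ∀ b c : K, (∃ a, b + a = c) ∨ (∃ a, c + a = b)) (r s : K) :
    ∃ x r' s' : K, r = r' + x ∧ s = s' + x ∧ (r' = 0 ∨ s' = 0) := by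
  rcases htot r s with ⟨d, hd⟩ | ⟨d, hd⟩
  · exact ⟨r, 0, d, (zero_add r).symm, by rw [← hd, add_comm], .inl rfl⟩
  · exact ⟨s, d, 0, by rw [← hd, add_comm], (zero_add s).symm, .inr rfl⟩

lemma eq_zero_of_sum_univ_eq_zero [Subsingleton (AddUnits K)] {ι : Type*} [Fintype ι]
    {f : ι → K} (h : ∑ i, f i = 0) : f = 0 :=
  funext fun i => sum_eq_zero_iff.1 h i (mem_univ i)

section Support

variable {ι : Type*}

lemma eq_update_add_single [DecidableEq ι] {f : ι → K} {i : ι} {r x : K} (h : f i = r + x) :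
    f = update f i r + Pi.single i x := by
  funext j
  rcases eq_or_ne j i with rfl | hj
  · simp [h]
  · simp [hj]

lemma ncard_support_comp_equiv {κ : Type*} (f : κ → K) (e : ι ≃ κ) :
    (support (f ∘ e)).ncard = (support f).ncard := by
  rw [support_comp_eq_preimage]
  exact Set.ncard_preimage_of_injective_subset_range e.injective (by simp)

lemma ncard_support_eq_sum_ncard_support_fiber [Fintype ι] {γ : Type*} [Fintype γ]
    (f : γ → ι → K) :
    (support fun x : ι × γ => f x.2 x.1).ncard = ∑ c, (support (f c)).ncard := by
  classical
  simp only [Set.ncard_eq_toFinset_card', Set.toFinset_ofPred, card_filter,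
    Fintype.sum_prod_type, support]
  exact sum_comm

variable [Finite ι] [DecidableEq ι]

lemma ncard_support_add_single_le (f : ι → K) (i : ι) (x : K) :
    (support (f + Pi.single i x)).ncard ≤ (support f).ncard + 1 := by
  calc (support (f + Pi.single i x)).ncard ≤ (insert i (support f)).ncard := by
        refine Set.ncard_le_ncard fun j hj => ?_
        rcases eq_or_ne j i with rfl | hji
        · exact Set.mem_insert _ _
        · exact Set.mem_insert_of_mem _ (by simpa [hji] using hj)
    _ ≤ (support f).ncard + 1 := Set.ncard_insert_le _ _

lemma ncard_support_update_le {f : ι → K} {i : ι} (hf : f i ≠ 0) (y : K) :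
    (support (update f i y)).ncard ≤ (support f).ncard := by
  refine Set.ncard_le_ncard fun j hj => ?_
  rcases eq_or_ne j i with rfl | hji
  · exact hf
  · simpa [hji] using hj

lemma ncard_support_update_zero_lt {f : ι → K} {i : ι} (hf : f i ≠ 0) :
    (support (update f i 0)).ncard < (support f).ncard := by
  rw [support_update_zero]
  exact Set.ncard_sdiff_singleton_lt_of_mem hf

end Support

variable {α β : Type*} [Fintype α] [Fintype β]

def IsConsistencyWitness (R : α → K) (S : β → K) (T : α × β → K) : Prop :=
  (∀ a, ∑ b, T (a, b) = R a) ∧ ∀ b, ∑ a, T (a, b) = S b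

def HasSparseConsistencyWitness (R : α → K) (S : β → K) : Prop :=
  ∃ T, IsConsistencyWitness R S T ∧ (support T).ncard ≤ (support R).ncard + (support S).ncard

namespace HasSparseConsistencyWitness

variable {R : α → K} {S : β → K}

lemma swap (h : HasSparseConsistencyWitness R S) : HasSparseConsistencyWitness S R := by
  obtain ⟨T, ⟨hrow, hcol⟩, hcard⟩ := h
  refine ⟨T ∘ Prod.swap, ⟨hcol, hrow⟩, ?_⟩
  rw [support_comp_eq_preimage, Set.ncard_preimage_of_injective_subset_range Prod.swap_injective
    (by simp), add_comm]
  exact hcard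

lemma zero : HasSparseConsistencyWitness (0 : α → K) (0 : β → K) :=
  ⟨0, ⟨fun _ => by simp, fun _ => by simp⟩, by simp⟩

lemma single_left [DecidableEq α] (a₀ : α) {x : K} (hS : ∑ b, S b = x) :
    HasSparseConsistencyWitness (Pi.single a₀ x) S := by
  subst hS
  refine ⟨fun p => (Pi.single a₀ (S p.2) : α → K) p.1, ⟨fun a => ?_, fun b => by simp⟩, ?_⟩
  · rcases eq_or_ne a a₀ with rfl | ha <;> simp [*]
  · calc (support fun p : α × β => (Pi.single a₀ (S p.2) : α → K) p.1).ncard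
        ≤ (Prod.mk a₀ '' support S).ncard := by
          refine Set.ncard_le_ncard fun ⟨a, b⟩ hp => ?_
          rcases eq_or_ne a a₀ with rfl | ha
          · exact ⟨b, by simpa using hp, rfl⟩
          · simp [ha] at hp
      _ ≤ _ := by rw [Set.ncard_image_of_injective _ (Prod.mk_right_injective a₀)]; omega

lemma add_single [DecidableEq α] [DecidableEq β] (h : HasSparseConsistencyWitness R S)
    {a : α} {b : β} {x : K}
    (hlt : (support R).ncard + (support S).ncard <
      (support (R + Pi.single a x)).ncard + (support (S + Pi.single b x)).ncard) :
    HasSparseConsistencyWitness (R + Pi.single a x) (S + Pi.single b x) := by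
  obtain ⟨T, ⟨hrow, hcol⟩, hcard⟩ := h
  refine ⟨T + Pi.single (a, b) x, ⟨fun a' => ?_, fun b' => ?_⟩, ?_⟩
  · simp [sum_add_distrib, hrow, Pi.single_apply, Prod.ext_iff, ite_and]
  · simp [sum_add_distrib, hcol, Pi.single_apply, Prod.ext_iff, ite_and]
  · have := ncard_support_add_single_le T (a, b) x
    omega

end HasSparseConsistencyWitness

variable [DecidableEq α] [DecidableEq β]

lemma exists_eq_add_single_add_single (htot : ∀ b c : K, (∃ a, b + a = c) ∨ (∃ a, c + a = b))
    {R : α → K} {S : β → K} {a : α} {b : β} (ha : R a ≠ 0) (hb : S b ≠ 0) :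
    ∃ (x : K) (R' : α → K) (S' : β → K), R = R' + Pi.single a x ∧ S = S' + Pi.single b x ∧
      (support R').ncard + (support S').ncard < (support R).ncard + (support S).ncard := by
  obtain ⟨x, r, s, hr, hs, hrs⟩ := exists_common_summand htot (R a) (S b)
  refine ⟨x, update R a r, update S b s, eq_update_add_single hr, eq_update_add_single hs, ?_⟩
  have hR := ncard_support_update_le ha r
  have hS := ncard_support_update_le hb s
  rcases hrs with rfl | rfl
  · have := ncard_support_update_zero_lt ha
    omega
  · have := ncard_support_update_zero_lt hb
    omega

theorem hasSparseConsistencyWitness_of_sum_eq [Subsingleton (AddUnits K)]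
    (hwc : ∀ a b c : K, a + b = a + c → b = c ∨ b = 0 ∨ c = 0)
    (htot : ∀ b c : K, (∃ a, b + a = c) ∨ (∃ a, c + a = b))
    {R : α → K} {S : β → K} (h : ∑ a, R a = ∑ b, S b) : HasSparseConsistencyWitness R S := by
  induction hn : (support R).ncard + (support S).ncard using Nat.strong_induction_on
    generalizing R S with
  | _ n ih =>
  by_cases hR : R = 0
  · obtain rfl := hR
    obtain rfl := eq_zero_of_sum_univ_eq_zero (h.symm.trans (by simp))
    exact .zero
  obtain ⟨a, ha⟩ := ne_iff.1 hR
  obtain ⟨b, hb⟩ : ∃ b, S b ≠ 0 := by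
    by_contra! hS
    exact hR (eq_zero_of_sum_univ_eq_zero (h.trans (by simp [hS])))
  obtain ⟨x, R, S, rfl, rfl, hlt⟩ := exists_eq_add_single_add_single htot ha hb
  simp only [Pi.add_apply, sum_add_distrib, sum_pi_single', mem_univ, if_true] at h
  rcases hwc x (∑ a, R a) (∑ b, S b) (by rwa [add_comm x, add_comm x]) with h' | hR0 | hS0
  · exact (ih _ (hn ▸ hlt) h' rfl).add_single (hn ▸ hlt)
  · obtain rfl := eq_zero_of_sum_univ_eq_zero hR0
    have hx : ∑ b', (S + Pi.single b x : β → K) b' = x := by simpa [sum_add_distrib] using h.symm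
    rw [zero_add]
    exact .single_left a hx
  · obtain rfl := eq_zero_of_sum_univ_eq_zero hS0
    have hx : ∑ a', (R + Pi.single a x : α → K) a' = x := by simpa [sum_add_distrib] using h
    rw [zero_add]
    exact (HasSparseConsistencyWitness.single_left b hx).swap

end SparseWitness

/-- over a positive, weakly cancellative, totally canonically
pre-ordered commutative monoid, any two inner consistent `K`-relations have a
sparse witness of consistency. -/
theorem sparse_witness (K : Type*) [AddCommMonoid K]
    (hpos : ∀ p q : K, p + q = 0 → p = 0 ∧ q = 0)
    (hwc : ∀ a b c : K, a + b = a + c → b = c ∨ b = 0 ∨ c = 0)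
    (htot : ∀ b c : K, (∃ a, b + a = c) ∨ (∃ a, c + a = b))
    (A B C : Type*) [Fintype A] [Fintype B] [Fintype C]
    (R : A × C → K) (S : B × C → K)
    (hinner : ∀ c : C, ∑ a : A, R (a, c) = ∑ b : B, S (b, c)) :
    ∃ T : A × B × C → K,
      (∀ (a : A) (c : C), ∑ b : B, T (a, b, c) = R (a, c)) ∧
      (∀ (b : B) (c : C), ∑ a : A, T (a, b, c) = S (b, c)) ∧
      {x : A × B × C | T x ≠ 0}.ncard ≤
        {x : A × C | R x ≠ 0}.ncard + {x : B × C | S x ≠ 0}.ncard := by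
  classical
  have : Subsingleton (AddUnits K) := .addUnits_of_isAddUnit fun p hp => by
    obtain ⟨q, hq⟩ := hp.exists_neg
    exact (hpos p q hq).1
  choose T hT hcard using fun c => hasSparseConsistencyWitness_of_sum_eq hwc htot (hinner c)
  refine ⟨fun x => T x.2.2 (x.1, x.2.1), fun a c => (hT c).1 a, fun b c => (hT c).2 b, ?_⟩
  calc {x : A × B × C | T x.2.2 (x.1, x.2.1) ≠ 0}.ncard
      = (support fun y : (A × B) × C => T y.2 y.1).ncard :=
        ncard_support_comp_equiv (fun y : (A × B) × C => T y.2 y.1) (Equiv.prodAssoc A B C).symm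
    _ = ∑ c, (support (T c)).ncard := ncard_support_eq_sum_ncard_support_fiber T
    _ ≤ ∑ c, ((support fun a => R (a, c)).ncard + (support fun b => S (b, c)).ncard) :=
        sum_le_sum fun c _ => hcard c
    _ = {x : A × C | R x ≠ 0}.ncard + {x : B × C | S x ≠ 0}.ncard := by
        rw [sum_add_distrib, ← ncard_support_eq_sum_ncard_support_fiber (fun c a => R (a, c)),
          ← ncard_support_eq_sum_ncard_support_fiber (fun c b => S (b, c))]
        rfl
end

section
/- Let K be a positive commutative monoid and let I be a nonempty (finite or infinite) index set. Then K has the transportation property if and only if the finite support power monoid K^I_fin of all finitely supported functions I → K, with pointwise addition, has the transportation property. -/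
/-- a positive commutative monoid `K` has the transportation
property iff the finite support power monoid `K^I_fin = I →₀ K` (finitely
supported functions with pointwise addition) has it, for any nonempty `I`. -/
theorem transportation_iff_finsuppPow (K : Type*) [AddCommMonoid K]
    (hpos : ∀ p q : K, p + q = 0 → p = 0 ∧ q = 0)
    (I : Type*) [Nonempty I] :
    TransportationProperty K ↔ TransportationProperty (I →₀ K) := by
  classical
  constructor
  · -- forward direction
    intro hK m n hm hn b c hsum
    set S : Finset I :=
      (Finset.univ.biUnion fun i => (b i).support) ∪
      (Finset.univ.biUnion fun j => (c j).support) with hS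
    have key : ∀ x : I, ∑ i, b i x = ∑ j, c j x := by
      intro x
      have := congrArg (fun f : I →₀ K => f x) hsum
      simpa [Finsupp.finset_sum_apply] using this
    choose D hD1 hD2 using fun x => hK m n hm hn (fun i => b i x) (fun j => c j x) (key x)
    have hsingle : ∀ (f : I →₀ K), f.support ⊆ S →
        ∑ x ∈ S, Finsupp.single x (f x) = f := by
      intro f hf
      rw [← Finset.sum_subset hf (fun x _ hx => by
        simp [Finsupp.notMem_support_iff.mp hx])]
      exact Finsupp.sum_single f
    refine ⟨fun i j => ∑ x ∈ S, Finsupp.single x (D x i j), ?_, ?_⟩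
    · intro i
      rw [Finset.sum_comm]
      have h1 : ∀ x ∈ S, ∑ j, Finsupp.single x (D x i j)
          = Finsupp.single x (b i x) := by
        intro x _
        rw [← Finsupp.single_finset_sum]
        simp [hD1 x i]
      rw [Finset.sum_congr rfl h1]
      exact hsingle (b i) (by
        intro x hx
        exact Finset.mem_union_left _ (Finset.mem_biUnion.mpr ⟨i, Finset.mem_univ i, hx⟩))
    · intro j
      rw [Finset.sum_comm]
      have h1 : ∀ x ∈ S, ∑ i, Finsupp.single x (D x i j)
          = Finsupp.single x (c j x) := by
        intro x _
        rw [← Finsupp.single_finset_sum]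
        simp [hD2 x j]
      rw [Finset.sum_congr rfl h1]
      exact hsingle (c j) (by
        intro x hx
        exact Finset.mem_union_right _ (Finset.mem_biUnion.mpr ⟨j, Finset.mem_univ j, hx⟩))
  · -- reverse direction
    intro hF m n hm hn b c hsum
    obtain ⟨i₀⟩ := ‹Nonempty I›
    have hsum' : ∑ i, Finsupp.single i₀ (b i) = ∑ j, Finsupp.single i₀ (c j) := by
      rw [← Finsupp.single_finset_sum, ← Finsupp.single_finset_sum, hsum]
    obtain ⟨d, hd1, hd2⟩ := hF m n hm hn (fun i => Finsupp.single i₀ (b i))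
      (fun j => Finsupp.single i₀ (c j)) hsum'
    refine ⟨fun i j => d i j i₀, ?_, ?_⟩
    · intro i
      have := congrArg (fun f : I →₀ K => f i₀) (hd1 i)
      simpa [Finsupp.finset_sum_apply] using this
    · intro j
      have := congrArg (fun f : I →₀ K => f i₀) (hd2 j)
      simpa [Finsupp.finset_sum_apply] using this
end

section
/- The balanced transportation instance b = (1,1,1), c = (1.5,1.5) over the monoid ℝ₁ = ({0} ∪ [1,∞), +, 0) has no solution. Concretely: there is no family x : Fin 3 → Fin 2 → ℝ such that for all i, j either x i j = 0 or x i j ≥ 1, x i 0 + x i 1 = 1 for every i ∈ Fin 3, and x 0 j + x 1 j + x 2 j = 3/2 for every j ∈ Fin 2. Consequently, the positive commutative monoid ℝ₁ does not have the transportation property. -/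
/-- the balanced transportation instance `b = (1,1,1)`,
`c = (1.5,1.5)` over the monoid `ℝ₁ = ({0} ∪ [1,∞), +, 0)` has no solution.
Hence `ℝ₁` does not have the transportation property. -/
theorem realGap_no_transportation_solution :
    ¬ ∃ x : Fin 3 → Fin 2 → ℝ,
      (∀ (i : Fin 3) (j : Fin 2), x i j = 0 ∨ 1 ≤ x i j) ∧
      (∀ i : Fin 3, x i 0 + x i 1 = 1) ∧
      (∀ j : Fin 2, x 0 j + x 1 j + x 2 j = 3 / 2) := by
  rintro ⟨x, h1, h2, h3⟩
  have r0 := h2 0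
  have r1 := h2 1
  have r2 := h2 2
  have c0 := h3 0
  have c1 := h3 1
  rcases h1 0 0 with h | h <;> rcases h1 0 1 with h' | h' <;>
    rcases h1 1 0 with h'' | h'' <;> rcases h1 1 1 with h''' | h''' <;>
    rcases h1 2 0 with h4 | h4 <;> rcases h1 2 1 with h5 | h5 <;>
    linarith
end

section
/- There do not exist 2×2 real positive semidefinite matrices X₁₁, X₁₂, X₂₁, X₂₂ such that X₁₁ + X₁₂ = B₁, X₂₁ + X₂₂ = B₂, X₁₁ + X₂₁ = C₁, and X₁₂ + X₂₂ = C₂, where B₁ = [[1/2, 1/2], [1/2, 1/2]], B₂ = [[1/2, -1/2], [-1/2, 1/2]], C₁ = [[1, 0], [0, 0]], and C₂ = [[0, 0], [0, 1]]. Consequently, the positive commutative monoid of 2×2 real positive semidefinite matrices under matrix addition does not have the transportation property, even though B₁ + B₂ = C₁ + C₂ = I is a balanced instance. -/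
open Matrix

/-!
Each column sum `Cⱼ` has a zero diagonal entry, and the diagonal of a positive semidefinite
matrix is nonnegative, so `X₁₁` vanishes at `(1,1)` and `X₁₂` at `(0,0)`. A positive semidefinite
matrix with a zero diagonal entry vanishes on the whole row and column of that entry. Hence
`X₁₁` and `X₁₂` are both diagonal, and so is their sum, which should be `B₁`, whose off-diagonal
entries are `1/2`.
-/

theorem Matrix.PosSemidef.diag_eq_zero_of_add_diag_eq_zero {n R : Type*} [Ring R] [PartialOrder R]
    [StarRing R] [AddLeftMono R] {A B : Matrix n n R} (hA : A.PosSemidef) (hB : B.PosSemidef)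
    {i : n} (h : A i i + B i i = 0) : A i i = 0 :=
  ((add_eq_zero_iff_of_nonneg hA.diag_nonneg hB.diag_nonneg).mp h).1

open scoped ComplexOrder in
theorem Matrix.PosSemidef.apply_eq_zero_of_diag_eq_zero {n 𝕜 : Type*} [Fintype n] [RCLike 𝕜]
    {A : Matrix n n 𝕜} (hA : A.PosSemidef) {i : n} (hi : A i i = 0) (j : n) :
    A i j = 0 ∧ A j i = 0 := by
  classical
  have hcol : A *ᵥ Pi.single i 1 = 0 :=
    (hA.dotProduct_mulVec_zero_iff _).mp (by simp [hi])
  have hji : A j i = 0 := by simpa using congrFun hcol j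
  exact ⟨by rw [← hA.isHermitian.apply i j, hji, star_zero], hji⟩

/-- there are no 2×2 real positive semidefinite matrices
`X₁₁, X₁₂, X₂₁, X₂₂` with row sums `B₁ = (I+X)/2`, `B₂ = (I-X)/2` and column
sums `C₁ = (I+Z)/2`, `C₂ = (I-Z)/2`, where `X` and `Z` are Pauli matrices.
Hence the positive commutative monoid of 2×2 real positive semidefinite
matrices under addition does not have the transportation property. -/
theorem psd_no_transportation_solution :
    ¬ ∃ X11 X12 X21 X22 : Matrix (Fin 2) (Fin 2) ℝ,
      X11.PosSemidef ∧ X12.PosSemidef ∧ X21.PosSemidef ∧ X22.PosSemidef ∧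
      X11 + X12 = !![(1 : ℝ)/2, 1/2; 1/2, 1/2] ∧
      X21 + X22 = !![(1 : ℝ)/2, -(1/2); -(1/2), 1/2] ∧
      X11 + X21 = !![(1 : ℝ), 0; 0, 0] ∧
      X12 + X22 = !![(0 : ℝ), 0; 0, 1] := by
  rintro ⟨X11, X12, X21, X22, h11, h12, h21, h22, hB1, -, hC1, hC2⟩
  have hX11 : X11 1 1 = 0 :=
    h11.diag_eq_zero_of_add_diag_eq_zero h21 (by simpa using congr_fun₂ hC1 1 1)
  have hX12 : X12 0 0 = 0 :=
    h12.diag_eq_zero_of_add_diag_eq_zero h22 (by simpa using congr_fun₂ hC2 0 0)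
  have hB1_01 := congr_fun₂ hB1 0 1
  simp [(h11.apply_eq_zero_of_diag_eq_zero hX11 0).2,
    (h12.apply_eq_zero_of_diag_eq_zero hX12 1).1] at hB1_01
end

section
/- Let K be a positive commutative monoid and let h : (K⁺ →₀ ℕ) → K be the free-cover homomorphism from the free commutative monoid generated by the set K⁺ of nonzero elements of K, given by h(f) = ∑_{x ∈ supp f} f(x) • x (each nonzero element of K treated as a generator and mapped to itself). Let A, B, C, D be finite types and let R1 : A × B → K, R2 : B × C → K, R3 : C × D → K be K-relations. If there exist h-lifts R*1 : A × B → (K⁺ →₀ ℕ), R*2 : B × C → (K⁺ →₀ ℕ), R*3 : C × D → (K⁺ →₀ ℕ) with h ∘ R*i = Ri for i = 1,2,3 such that the triple R*1, R*2, R*3 is pairwise consistent as (K⁺ →₀ ℕ)-relations, then R1, R2, R3 is globally consistent: there exists W : A × B × C × D → K with ∑_{c,d} W(a,b,c,d) = R1(a,b), ∑_{a,d} W(a,b,c,d) = R2(b,c), and ∑_{a,b} W(a,b,c,d) = R3(c,d). -/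
lemma nat_coupling {α β : Type*} [Fintype α] [Fintype β] :
    ∀ (n : ℕ) (u : α → ℕ) (v : β → ℕ), (∑ a, u a = n) → (∑ b, v b = n) →
    ∃ N : α → β → ℕ, (∀ a, ∑ b, N a b = u a) ∧ (∀ b, ∑ a, N a b = v b) := by
  classical
  intro n
  induction n with
  | zero =>
    intro u v hu hv
    refine ⟨fun _ _ => 0, fun a => ?_, fun b => ?_⟩
    · simp [(Finset.sum_eq_zero_iff.1 hu a (Finset.mem_univ a))]
    · simp [(Finset.sum_eq_zero_iff.1 hv b (Finset.mem_univ b))]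
  | succ n ih =>
    intro u v hu hv
    have ha0 : ∃ a0, u a0 ≠ 0 := by
      by_contra h
      push_neg at h
      simp [h] at hu
    have hb0 : ∃ b0, v b0 ≠ 0 := by
      by_contra h
      push_neg at h
      simp [h] at hv
    obtain ⟨a0, ha0⟩ := ha0
    obtain ⟨b0, hb0⟩ := hb0
    set u' := Function.update u a0 (u a0 - 1) with hu'
    set v' := Function.update v b0 (v b0 - 1) with hv'
    have hsu : ∑ a, u' a = n := by
      have := Finset.sum_update_of_mem (Finset.mem_univ a0) u (u a0 - 1)
      have h2 : ∑ a, u a = u a0 + ∑ a ∈ Finset.univ \ {a0}, u a := by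
        rw [Finset.sdiff_singleton_eq_erase]
        exact (Finset.add_sum_erase _ _ (Finset.mem_univ a0)).symm
      rw [hu'] at *
      rw [this]
      omega
    have hsv : ∑ b, v' b = n := by
      have := Finset.sum_update_of_mem (Finset.mem_univ b0) v (v b0 - 1)
      have h2 : ∑ b, v b = v b0 + ∑ b ∈ Finset.univ \ {b0}, v b := by
        rw [Finset.sdiff_singleton_eq_erase]
        exact (Finset.add_sum_erase _ _ (Finset.mem_univ b0)).symm
      rw [hv'] at *
      rw [this]
      omega
    obtain ⟨N', hr, hc⟩ := ih u' v' hsu hsv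
    refine ⟨fun a b => N' a b + (if a = a0 ∧ b = b0 then 1 else 0), fun a => ?_, fun b => ?_⟩
    · rw [Finset.sum_add_distrib, hr a]
      by_cases h : a = a0
      · subst h
        simp [hu', Function.update_self]
        omega
      · simp [h, hu', Function.update_of_ne h]
    · rw [Finset.sum_add_distrib, hc b]
      by_cases h : b = b0
      · subst h
        simp [hv', Function.update_self]
        omega
      · simp [h, hv', Function.update_of_ne h]

lemma finsupp_coupling {ι α β : Type*} [Fintype α] [Fintype β]
    (u : α → (ι →₀ ℕ)) (v : β → (ι →₀ ℕ)) (h : ∑ a, u a = ∑ b, v b) :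
    ∃ N : α → β → (ι →₀ ℕ), (∀ a, ∑ b, N a b = u a) ∧ (∀ b, ∑ a, N a b = v b) := by
  classical
  have key : ∀ x : ι, ∃ Nx : α → β → ℕ,
      (∀ a, ∑ b, Nx a b = u a x) ∧ (∀ b, ∑ a, Nx a b = v b x) := by
    intro x
    apply nat_coupling (∑ b, v b x)
    · have := congrArg (fun f : ι →₀ ℕ => f x) h
      simpa [Finsupp.finset_sum_apply] using this
    · rfl
  choose Nx hrow hcol using key
  refine ⟨fun a b => Finsupp.onFinset (u a).support (fun x => Nx x a b) ?_, ?_, ?_⟩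
  · intro x hx
    rw [Finsupp.mem_support_iff]
    intro h0
    have hle : Nx x a b ≤ ∑ b', Nx x a b' :=
      Finset.single_le_sum (fun _ _ => Nat.zero_le _) (Finset.mem_univ b)
    rw [hrow x a, h0] at hle
    exact hx (Nat.le_zero.mp hle)
  · intro a
    ext x
    rw [Finsupp.finset_sum_apply]
    simpa using hrow x a
  · intro b
    ext x
    rw [Finsupp.finset_sum_apply]
    simpa using hcol x b

/-- The free-cover homomorphism from the free commutative monoid generated by
the nonzero elements of `K` (realized as `{x : K // x ≠ 0} →₀ ℕ`) onto `K`: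
each generator is mapped to itself. -/
def freeCover {K : Type*} [AddCommMonoid K] (f : {x : K // x ≠ 0} →₀ ℕ) : K :=
  ∑ x ∈ f.support, f x • (x : K)

lemma freeCover_sum {K : Type*} [AddCommMonoid K] {ι : Type*} (s : Finset ι)
    (f : ι → ({x : K // x ≠ 0} →₀ ℕ)) :
    freeCover (∑ i ∈ s, f i) = ∑ i ∈ s, freeCover (f i) := by
  classical
  have hco : freeCover (K := K) =
      ⇑(Finsupp.liftAddHom (fun x : {x : K // x ≠ 0} =>
        (AddMonoidHom.flip (smulAddHom ℕ K)) (x : K))) := by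
    funext g
    simp [freeCover, Finsupp.liftAddHom_apply, Finsupp.sum]
  rw [hco, map_sum]

/-- if `K`-relations `R1, R2, R3` on the path-of-length-3 schema
admit lifts to the free cover of `K` that are pairwise consistent, then
`R1, R2, R3` are globally consistent. -/
theorem pairwise_upToFreeCover_implies_global (K : Type*) [AddCommMonoid K]
    (hpos : ∀ p q : K, p + q = 0 → p = 0 ∧ q = 0)
    (A B C D : Type*) [Fintype A] [Fintype B] [Fintype C] [Fintype D]
    (R1 : A × B → K) (R2 : B × C → K) (R3 : C × D → K)
    (hlift : ∃ (R1s : A × B → ({x : K // x ≠ 0} →₀ ℕ))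
               (R2s : B × C → ({x : K // x ≠ 0} →₀ ℕ))
               (R3s : C × D → ({x : K // x ≠ 0} →₀ ℕ)),
      (∀ p : A × B, freeCover (R1s p) = R1 p) ∧
      (∀ p : B × C, freeCover (R2s p) = R2 p) ∧
      (∀ p : C × D, freeCover (R3s p) = R3 p) ∧
      (∃ W12 : A × B × C → ({x : K // x ≠ 0} →₀ ℕ),
        (∀ (a : A) (b : B), ∑ c : C, W12 (a, b, c) = R1s (a, b)) ∧
        (∀ (b : B) (c : C), ∑ a : A, W12 (a, b, c) = R2s (b, c))) ∧
      (∃ W23 : B × C × D → ({x : K // x ≠ 0} →₀ ℕ),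
        (∀ (b : B) (c : C), ∑ d : D, W23 (b, c, d) = R2s (b, c)) ∧
        (∀ (c : C) (d : D), ∑ b : B, W23 (b, c, d) = R3s (c, d))) ∧
      (∃ W13 : A × B × C × D → ({x : K // x ≠ 0} →₀ ℕ),
        (∀ (a : A) (b : B), ∑ c : C, ∑ d : D, W13 (a, b, c, d) = R1s (a, b)) ∧
        (∀ (c : C) (d : D), ∑ a : A, ∑ b : B, W13 (a, b, c, d) = R3s (c, d)))) :
    ∃ W : A × B × C × D → K,
      (∀ (a : A) (b : B), ∑ c : C, ∑ d : D, W (a, b, c, d) = R1 (a, b)) ∧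
      (∀ (b : B) (c : C), ∑ a : A, ∑ d : D, W (a, b, c, d) = R2 (b, c)) ∧
      (∀ (c : C) (d : D), ∑ a : A, ∑ b : B, W (a, b, c, d) = R3 (c, d)) := by
  classical
  obtain ⟨R1s, R2s, R3s, h1, h2, h3, ⟨W12, h12a, h12b⟩, ⟨W23, h23a, h23b⟩, -⟩ := hlift
  have hsum : ∀ p : B × C,
      ∑ a : A, W12 (a, p.1, p.2) = ∑ d : D, W23 (p.1, p.2, d) := by
    intro ⟨b, c⟩
    rw [h12b b c, h23a b c]
  choose N hN1 hN2 using fun p : B × C =>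
    finsupp_coupling (fun a => W12 (a, p.1, p.2)) (fun d => W23 (p.1, p.2, d)) (hsum p)
  refine ⟨fun q => freeCover (N (q.2.1, q.2.2.1) q.1 q.2.2.2), ?_, ?_, ?_⟩
  · intro a b
    have : ∀ c : C, ∑ d : D, freeCover (N (b, c) a d) = freeCover (W12 (a, b, c)) := by
      intro c
      rw [← freeCover_sum, hN1 (b, c) a]
    simp only [this]
    rw [← freeCover_sum, h12a a b, h1]
  · intro b c
    have : ∀ a : A, ∑ d : D, freeCover (N (b, c) a d) = freeCover (W12 (a, b, c)) := by
      intro a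
      rw [← freeCover_sum, hN1 (b, c) a]
    simp only [this]
    rw [← freeCover_sum, h12b b c, h2]
  · intro c d
    have hswap : ∑ a : A, ∑ b : B, freeCover (N (b, c) a d)
        = ∑ b : B, ∑ a : A, freeCover (N (b, c) a d) := Finset.sum_comm
    rw [hswap]
    have : ∀ b : B, ∑ a : A, freeCover (N (b, c) a d) = freeCover (W23 (b, c, d)) := by
      intro b
      rw [← freeCover_sum, hN2 (b, c) d]
    simp only [this]
    rw [← freeCover_sum, h23b c d, h3]
end
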